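/- arXiv:1308.1976 — 2 statements merged into one kernel-verified Lean document; each statement's English description precedes it below -/
import Mathlib

section
/- Let X be a group that is residually a finite π-group and Y a locally cyclic subgroup of X. Then the π'-isolator of Y in X (the smallest π'-isolated subgroup containing Y) is locally cyclic. -/
open Pointwise

def IsPiNumber (π : Set ℕ) (n : ℕ) : Prop := n ≠ 0 ∧ ∀ p : ℕ, p.Prime → p ∣ n → p ∈ π

def IsPiPrimeNumber (π : Set ℕ) (n : ℕ) : Prop := n ≠ 0 ∧ ∀ p : ℕ, p.Prime → p ∣ n → p ∉ π

/-- `N` is a normal subgroup of finite π-index, i.e. `N ∈ Ω_π(X)`. -/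
def InOmega (π : Set ℕ) {X : Type*} [Group X] (N : Subgroup X) : Prop :=
  N.Normal ∧ IsPiNumber π N.index

/-- `Y` is separable by the family `F` of subgroups. -/
def SepBy {X : Type*} [Group X] (F : Set (Subgroup X)) (Y : Subgroup X) : Prop :=
  (⋂ N ∈ F, (Y : Set X) * (N : Set X)) = (Y : Set X)

/-- `Y` is 𝓕_π-separable in `X`. -/
def SepIn (π : Set ℕ) {X : Type*} [Group X] (Y : Subgroup X) : Prop :=
  SepBy {N : Subgroup X | InOmega π N} Y

/-- `Y` is π'-isolated in `X`. -/
def Isolated (π : Set ℕ) {X : Type*} [Group X] (Y : Subgroup X) : Prop :=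
  ∀ x : X, ∀ q : ℕ, IsPiPrimeNumber π q → x ^ q ∈ Y → x ∈ Y

/-- `X` is residually a finite π-group. -/
def ResiduallyPi (π : Set ℕ) (X : Type*) [Group X] : Prop :=
  ∀ x : X, x ≠ 1 → ∃ N : Subgroup X, InOmega π N ∧ x ∉ N

/-- A subgroup `Z` of `X` is locally cyclic (every two of its elements lie in a
common cyclic subgroup of `Z`). -/
def LocCyclic {X : Type*} [Group X] (Z : Subgroup X) : Prop :=
  ∀ a ∈ Z, ∀ b ∈ Z, ∃ c ∈ Z, a ∈ Subgroup.zpowers c ∧ b ∈ Subgroup.zpowers c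

/-!
In a residually finite π-group, if `x ^ q` and `y ^ r` (with `q`, `r` π'-numbers) lie in a common
cyclic group `⟨c⟩`, then `x` and `y` commute: in every finite π-quotient, `x` and `y` are powers of
`x ^ q` and `y ^ r`. Hence the elements having a π'-power in `Y` form a π'-isolated subgroup
containing `Y`, which therefore contains the isolator `Z`. For `a, b ∈ Z` there is a π'-number `n`
with `a ^ n, b ^ n ∈ ⟨c⟩`; the group `⟨a, b⟩` is abelian without π'-torsion, so `x ↦ x ^ n` embeds
it into `⟨c⟩`, and it is cyclic.
-/

namespace IsPiNumber

lemma coprime {π : Set ℕ} {n q : ℕ} (hn : IsPiNumber π n) (hq : IsPiPrimeNumber π q) :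
    n.Coprime q :=
  Nat.coprime_of_dvd fun p hp hpn hpq => hq.2 p hp hpq (hn.2 p hp hpn)

end IsPiNumber

namespace IsPiPrimeNumber

lemma one (π : Set ℕ) : IsPiPrimeNumber π 1 :=
  ⟨one_ne_zero, fun _ hp hp1 _ => hp.ne_one (Nat.dvd_one.mp hp1)⟩

lemma mul {π : Set ℕ} {q r : ℕ} (hq : IsPiPrimeNumber π q) (hr : IsPiPrimeNumber π r) :
    IsPiPrimeNumber π (q * r) :=
  ⟨mul_ne_zero hq.1 hr.1, fun p hp hpqr => (hp.dvd_mul.mp hpqr).elim (hq.2 p hp) (hr.2 p hp)⟩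

end IsPiPrimeNumber

lemma Subgroup.mem_of_pow_mem_of_coprime {G : Type*} [Group G] {H : Subgroup G} {x : G} {n : ℕ}
    (hn : n.Coprime (orderOf x)) (hx : x ^ n ∈ H) : x ∈ H := by
  obtain ⟨m, hm⟩ := exists_pow_eq_self_of_coprime hn
  exact hm ▸ H.pow_mem hx m

section Quotient

variable {π : Set ℕ} {X : Type*} [Group X] {N : Subgroup X} [N.Normal]

lemma coprime_orderOf_mk (hN : IsPiNumber π N.index) {q : ℕ} (hq : IsPiPrimeNumber π q) (x : X) :
    q.Coprime (orderOf (x : X ⧸ N)) :=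
  ((hN.coprime hq).coprime_dvd_left (orderOf_dvd_natCard _)).symm

lemma mk_mem_zpowers_mk_of_pow_mem (hN : IsPiNumber π N.index) {q : ℕ}
    (hq : IsPiPrimeNumber π q) {x c : X} (hx : x ^ q ∈ Subgroup.zpowers c) :
    (x : X ⧸ N) ∈ Subgroup.zpowers (c : X ⧸ N) :=
  Subgroup.mem_of_pow_mem_of_coprime (coprime_orderOf_mk hN hq x) <| by
    simpa [MonoidHom.map_zpowers] using Subgroup.mem_map_of_mem (QuotientGroup.mk' N) hx

end Quotient

namespace ResiduallyPi

variable {π : Set ℕ} {X : Type*} [Group X]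

lemma eq_of_forall_mk_eq (hres : ResiduallyPi π X) {x y : X}
    (h : ∀ (N : Subgroup X) [N.Normal], IsPiNumber π N.index → (x : X ⧸ N) = y) : x = y := by
  by_contra hxy
  obtain ⟨N, ⟨hNormal, hN⟩, hxyN⟩ := hres (x⁻¹ * y) (by rwa [Ne, inv_mul_eq_one])
  exact hxyN (QuotientGroup.eq.mp (h N hN))

lemma eq_one_of_pow_eq_one (hres : ResiduallyPi π X) {x : X} {q : ℕ}
    (hq : IsPiPrimeNumber π q) (h : x ^ q = 1) : x = 1 :=
  hres.eq_of_forall_mk_eq fun N _ hN => Subgroup.mem_bot.mp <|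
    Subgroup.mem_of_pow_mem_of_coprime (coprime_orderOf_mk hN hq x) <| by
      rw [← QuotientGroup.mk_pow, h, QuotientGroup.mk_one]
      exact Subgroup.one_mem _

lemma eq_of_pow_eq (hres : ResiduallyPi π X) {x y : X} (hxy : Commute x y) {q : ℕ}
    (hq : IsPiPrimeNumber π q) (h : x ^ q = y ^ q) : x = y := by
  refine mul_inv_eq_one.mp (hres.eq_one_of_pow_eq_one hq ?_)
  rw [hxy.inv_right.mul_pow, inv_pow, h, mul_inv_cancel]

lemma commute_of_pow_mem_zpowers (hres : ResiduallyPi π X) {x y c : X} {q r : ℕ}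
    (hq : IsPiPrimeNumber π q) (hr : IsPiPrimeNumber π r) (hx : x ^ q ∈ Subgroup.zpowers c)
    (hy : y ^ r ∈ Subgroup.zpowers c) : Commute x y :=
  hres.eq_of_forall_mk_eq fun N _ hN => by
    obtain ⟨i, hi⟩ := mk_mem_zpowers_mk_of_pow_mem hN hq hx
    obtain ⟨j, hj⟩ := mk_mem_zpowers_mk_of_pow_mem hN hr hy
    simp only [QuotientGroup.mk_mul, ← hi, ← hj]
    exact Commute.zpow_zpow_self _ i j

lemma isCyclic_closure_of_pow_mem_zpowers (hres : ResiduallyPi π X) {S : Set X} {c : X} {n : ℕ}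
    (hn : IsPiPrimeNumber π n) (hS : ∀ s ∈ S, s ^ n ∈ Subgroup.zpowers c) :
    IsCyclic (Subgroup.closure S) := by
  have hcomm : ∀ x ∈ Subgroup.closure S, ∀ y ∈ Subgroup.closure S, Commute x y :=
    isMulCommutative_iff_of_setLike.mp <| Subgroup.isMulCommutative_closure
      fun x hx y hy => hres.commute_of_pow_mem_zpowers hn hn (hS x hx) (hS y hy)
  have hpow : ∀ x ∈ Subgroup.closure S, x ^ n ∈ Subgroup.zpowers c := fun x hx => by
    induction hx using Subgroup.closure_induction with
    | mem s hs => exact hS s hs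
    | one => simp
    | mul x y hx hy hxn hyn => rw [(hcomm x hx y hy).mul_pow]; exact mul_mem hxn hyn
    | inv x _ hxn => rw [inv_pow]; exact inv_mem hxn
  let f : Subgroup.closure S →* Subgroup.zpowers c :=
    MonoidHom.mk' (fun x => ⟨x ^ n, hpow x x.2⟩)
      fun x y => Subtype.ext ((hcomm x x.2 y y.2).mul_pow n)
  exact isCyclic_of_injective f fun x y hxy =>
    Subtype.ext (hres.eq_of_pow_eq (hcomm x x.2 y y.2) hn (congrArg Subtype.val hxy))

def piPrimeRoots (hres : ResiduallyPi π X) {Y : Subgroup X} (hY : LocCyclic Y) : Subgroup X where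
  carrier := {x | ∃ q, IsPiPrimeNumber π q ∧ x ^ q ∈ Y}
  one_mem' := ⟨1, .one π, by simp⟩
  inv_mem' := by
    rintro x ⟨q, hq, hx⟩
    exact ⟨q, hq, by rw [inv_pow]; exact inv_mem hx⟩
  mul_mem' := by
    rintro x y ⟨q, hq, hx⟩ ⟨r, hr, hy⟩
    obtain ⟨c, -, hxc, hyc⟩ := hY _ hx _ hy
    refine ⟨q * r, hq.mul hr, ?_⟩
    rw [(hres.commute_of_pow_mem_zpowers hq hr hxc hyc).mul_pow, pow_mul, mul_comm q r, pow_mul]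
    exact mul_mem (pow_mem hx r) (pow_mem hy q)

lemma le_piPrimeRoots (hres : ResiduallyPi π X) {Y : Subgroup X} (hY : LocCyclic Y) :
    Y ≤ hres.piPrimeRoots hY :=
  fun y hy => ⟨1, .one π, by rwa [pow_one]⟩

lemma isolated_piPrimeRoots (hres : ResiduallyPi π X) {Y : Subgroup X} (hY : LocCyclic Y) :
    Isolated π (hres.piPrimeRoots hY) :=
  fun _ q hq ⟨r, hr, hx⟩ => ⟨q * r, hq.mul hr, by rwa [pow_mul]⟩

end ResiduallyPi

theorem isolator_locCyclic_general (π : Set ℕ) {X : Type*} [Group X]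
    (hres : ResiduallyPi π X) (Y : Subgroup X) (hY : LocCyclic Y)
    (Z : Subgroup X)
    (hmin : ∀ W : Subgroup X, Y ≤ W → Isolated π W → Z ≤ W) :
    LocCyclic Z := by
  have hZ : Z ≤ hres.piPrimeRoots hY :=
    hmin _ (hres.le_piPrimeRoots hY) (hres.isolated_piPrimeRoots hY)
  intro a ha b hb
  obtain ⟨q, hq, haY⟩ := hZ ha
  obtain ⟨r, hr, hbY⟩ := hZ hb
  obtain ⟨c, -, hac, hbc⟩ := hY _ haY _ hbY
  have hcyc : IsCyclic (Subgroup.closure {a, b}) :=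
    hres.isCyclic_closure_of_pow_mem_zpowers (hq.mul hr) <| by
      rintro s (rfl | rfl)
      · rw [pow_mul]; exact pow_mem hac r
      · rw [mul_comm, pow_mul]; exact pow_mem hbc q
  obtain ⟨g, hg⟩ := (Subgroup.closure {a, b}).isCyclic_iff_exists_zpowers_eq_top.mp hcyc
  have hle : Subgroup.closure {a, b} ≤ Z := (Subgroup.closure_le Z).mpr (Set.pair_subset ha hb)
  exact ⟨g, hle (hg ▸ Subgroup.mem_zpowers g), hg ▸ Subgroup.subset_closure (by simp),
    hg ▸ Subgroup.subset_closure (by simp)⟩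

/-- If `X` is residually a finite π-group and `Y` is locally cyclic, then the
π'-isolator of `Y` (the smallest π'-isolated subgroup containing `Y`) is locally cyclic. -/
theorem isolator_locCyclic (π : Set ℕ) {X : Type*} [Group X]
    (hres : ResiduallyPi π X) (Y : Subgroup X) (hY : LocCyclic Y)
    (Z : Subgroup X) (hYZ : Y ≤ Z) (hZ : Isolated π Z)
    (hmin : ∀ W : Subgroup X, Y ≤ W → Isolated π W → Z ≤ W) :
    LocCyclic Z :=
  isolator_locCyclic_general π hres Y hY Z hmin
end

section
/- Let G = ⟨A * B; [H,K]=1⟩ with U = HK, and let Θ_π(U) = {(X∩H)(Y∩K) : X ∈ Ω_π(A), Y ∈ Ω_π(B)}. If L ∈ Ω_π(G) then (L∩H)(L∩K) ∈ Θ_π(U); consequently, any cyclic subgroup of U that is π'-isolated in U but not separable by Θ_π(U) fails to be 𝓕_π-separable in G. -/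
open Pointwise

open Monoid

open scoped commutatorElement

variable {A B : Type*} [Group A] [Group B]

/-- The free product of `A` and `B` with commuting subgroups `H ≤ A`, `K ≤ B`:
the quotient of the free product `A * B` by the normal closure of the mutual
commutators `[h, k]`, `h ∈ H`, `k ∈ K`. -/
abbrev FPComm (H : Subgroup A) (K : Subgroup B) : Type _ :=
  Coprod A B ⧸ Subgroup.normalClosure
    {x : Coprod A B | ∃ h ∈ H, ∃ k ∈ K, x = ⁅(Coprod.inl h : Coprod A B), Coprod.inr k⁆}

/-- The canonical map `A → G`. -/
noncomputable def iaFP (H : Subgroup A) (K : Subgroup B) : A →* FPComm H K :=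
  (QuotientGroup.mk' _).comp Coprod.inl

/-- The canonical map `B → G`. -/
noncomputable def ibFP (H : Subgroup A) (K : Subgroup B) : B →* FPComm H K :=
  (QuotientGroup.mk' _).comp Coprod.inr

/-- The subgroup `U = HK` of `G`. -/
noncomputable def Usub (H : Subgroup A) (K : Subgroup B) : Subgroup (FPComm H K) :=
  H.map (iaFP H K) ⊔ K.map (ibFP H K)

/-- The subgroup `M = ⟨A, U⟩` of `G`. -/
noncomputable def Msub (H : Subgroup A) (K : Subgroup B) : Subgroup (FPComm H K) :=
  (iaFP H K).range ⊔ Usub H K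

/-- The subgroup `N = ⟨B, U⟩` of `G`. -/
noncomputable def Nsub (H : Subgroup A) (K : Subgroup B) : Subgroup (FPComm H K) :=
  (ibFP H K).range ⊔ Usub H K

/-!
The preimages of `L ∈ Ω_π(G)` in `A` and `B` lie in `Ω_π(A)` and `Ω_π(B)`, which gives
`(L ∩ H)(L ∩ K) ∈ Θ_π(U)`. As `(L ∩ H)(L ∩ K) ≤ L`, every member of `Ω_π(G)` contains a member
of `Θ_π(U)`, so separability by `Ω_π(G)` implies separability by `Θ_π(U)`.
-/

lemma IsPiNumber.of_dvd {π : Set ℕ} {m n : ℕ} (hn : IsPiNumber π n) (hmn : m ∣ n) :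
    IsPiNumber π m :=
  ⟨ne_zero_of_dvd_ne_zero hn.1 hmn, fun p hp hpm => hn.2 p hp (hpm.trans hmn)⟩

lemma InOmega.comap {π : Set ℕ} {G₁ G₂ : Type*} [Group G₁] [Group G₂] {L : Subgroup G₂}
    (hL : InOmega π L) (f : G₁ →* G₂) : InOmega π (L.comap f) := by
  have := hL.1
  refine ⟨hL.1.comap f, hL.2.of_dvd ?_⟩
  rw [Subgroup.index_comap]
  exact Subgroup.relIndex_dvd_index_of_normal L f.range

lemma Subgroup.inf_map_eq_map_comap_inf {G₁ G₂ : Type*} [Group G₁] [Group G₂] (f : G₁ →* G₂)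
    (L : Subgroup G₂) (H : Subgroup G₁) : L ⊓ H.map f = (L.comap f ⊓ H).map f :=
  SetLike.coe_injective (Set.image_preimage_inter f H L).symm

lemma SepBy.of_forall_exists_le {X : Type*} [Group X] {F F' : Set (Subgroup X)}
    {Y : Subgroup X} (hF : SepBy F Y) (hle : ∀ N ∈ F, ∃ N' ∈ F', N' ≤ N) : SepBy F' Y := by
  refine Set.Subset.antisymm (Set.Subset.trans ?_ hF.subset) fun y hy =>
    Set.mem_iInter₂.2 fun N _ => ⟨y, hy, 1, N.one_mem, mul_one y⟩
  refine Set.subset_iInter₂ fun N hN => ?_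
  obtain ⟨N', hN', hN'N⟩ := hle N hN
  exact (Set.iInter₂_subset N' hN').trans (Set.mul_subset_mul_left hN'N)

/-- The family `Θ_π(U)`. -/
def theta (π : Set ℕ) (H : Subgroup A) (K : Subgroup B) : Set (Subgroup (FPComm H K)) :=
  {Q | ∃ (X : Subgroup A) (Y : Subgroup B), InOmega π X ∧ InOmega π Y ∧
    Q = ((X ⊓ H).map (iaFP H K)) ⊔ ((Y ⊓ K).map (ibFP H K))}

lemma inf_sup_inf_mem_theta {π : Set ℕ} {H : Subgroup A} {K : Subgroup B}
    {L : Subgroup (FPComm H K)} (hL : InOmega π L) :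
    (L ⊓ H.map (iaFP H K)) ⊔ (L ⊓ K.map (ibFP H K)) ∈ theta π H K :=
  ⟨_, _, hL.comap (iaFP H K), hL.comap (ibFP H K), by
    rw [Subgroup.inf_map_eq_map_comap_inf, Subgroup.inf_map_eq_map_comap_inf]⟩

/-- In `G = ⟨A * B; [H,K] = 1⟩` with `U = HK`: for `L ∈ Ω_π(G)` the subgroup
`(L ∩ H)(L ∩ K)` belongs to `Θ_π(U)`; consequently a cyclic subgroup of `U` that is
π'-isolated in `U` but not separable by `Θ_π(U)` is not 𝓕_π-separable in `G`. -/
theorem theta_and_not_sep (π : Set ℕ) (H : Subgroup A) (K : Subgroup B) :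
    (∀ L : Subgroup (FPComm H K), InOmega π L →
      ((L ⊓ H.map (iaFP H K)) ⊔ (L ⊓ K.map (ibFP H K))) ∈
        {Q : Subgroup (FPComm H K) | ∃ (X : Subgroup A) (Y : Subgroup B),
          InOmega π X ∧ InOmega π Y ∧
          Q = ((X ⊓ H).map (iaFP H K)) ⊔ ((Y ⊓ K).map (ibFP H K))}) ∧
    (∀ C : Subgroup (FPComm H K), C ≤ Usub H K →
      (∃ c, C = Subgroup.zpowers c) →
      (∀ g ∈ Usub H K, ∀ q : ℕ, IsPiPrimeNumber π q → g ^ q ∈ C → g ∈ C) →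
      ¬ SepBy {Q : Subgroup (FPComm H K) | ∃ (X : Subgroup A) (Y : Subgroup B),
          InOmega π X ∧ InOmega π Y ∧
          Q = ((X ⊓ H).map (iaFP H K)) ⊔ ((Y ⊓ K).map (ibFP H K))} C →
      ¬ SepIn π C) :=
  ⟨fun _ hL => inf_sup_inf_mem_theta hL, fun _ _ _ _ hC hsep =>
    hC (hsep.of_forall_exists_le fun _ hL =>
      ⟨_, inf_sup_inf_mem_theta hL, sup_le inf_le_left inf_le_left⟩)⟩
end
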